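/- arXiv:1408.3850 — 10 statements merged into one kernel-verified Lean document; each statement's English description precedes it below -/
import Mathlib

section
/- For every integer d ≥ 2 and every real number t, A_d(t)·M_d(t) − B_d(t)² = (d−1)² · Σ_{k=0}^{2d−4} a_k t^{2k}, where a_k = Σ_{0≤i≤d−1, 0≤j≤d−2, i+j=k} C(d−1,i)²·C(d−2,j)² − Σ_{0≤i≤d−2, 0≤j≤d−2, i+j=k−1} C(d−2,i)·C(d−1,i+1)·C(d−2,j)·C(d−1,j+1). -/
open Finset MeasureTheory

/-- `M d t = ∑_{k=0}^{d-1} C(d-1,k)² t^{2k}`. -/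
noncomputable def M (d : ℕ) (t : ℝ) : ℝ :=
  ∑ k ∈ Finset.range d, ((d - 1).choose k : ℝ) ^ 2 * t ^ (2 * k)

/-- `A d t = ∑_{k=1}^{d-1} k² C(d-1,k)² t^{2(k-1)}`. -/
noncomputable def A (d : ℕ) (t : ℝ) : ℝ :=
  ∑ k ∈ Finset.Icc 1 (d - 1), (k : ℝ) ^ 2 * ((d - 1).choose k : ℝ) ^ 2 * t ^ (2 * (k - 1))

/-- `B d t = ∑_{k=1}^{d-1} k C(d-1,k)² t^{2k-1}`. -/
noncomputable def B (d : ℕ) (t : ℝ) : ℝ :=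
  ∑ k ∈ Finset.Icc 1 (d - 1), (k : ℝ) * ((d - 1).choose k : ℝ) ^ 2 * t ^ (2 * k - 1)

/-- The density `f d t = (1/π)·√(A_d(t)·M_d(t) − B_d(t)²) / M_d(t)`. -/
noncomputable def f (d : ℕ) (t : ℝ) : ℝ :=
  (1 / Real.pi) * Real.sqrt (A d t * M d t - (B d t) ^ 2) / M d t

/-- The coefficients `a_k`. -/
noncomputable def a (d k : ℕ) : ℝ :=
  (∑ i ∈ Finset.range d, ∑ j ∈ Finset.range (d - 1),
      if i + j = k then ((d - 1).choose i : ℝ) ^ 2 * ((d - 2).choose j : ℝ) ^ 2 else 0)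
  - (∑ i ∈ Finset.range (d - 1), ∑ j ∈ Finset.range (d - 1),
      if i + j + 1 = k then
        ((d - 2).choose i : ℝ) * ((d - 1).choose (i + 1) : ℝ) *
          ((d - 2).choose j : ℝ) * ((d - 1).choose (j + 1) : ℝ)
      else 0)

lemma key (e i : ℕ) : ((e : ℝ) + 1) * (e.choose i : ℝ) = ((e+1).choose (i+1) : ℝ) * ((i : ℝ) + 1) := by
  exact_mod_cast congrArg (Nat.cast (R := ℝ)) (Nat.add_one_mul_choose_eq e i)

lemma sum_Icc_shift (e : ℕ) (F : ℕ → ℝ) :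
    ∑ k ∈ Icc 1 (e+1), F k = ∑ i ∈ range (e+1), F (1 + i) := by
  rw [← Finset.Ico_add_one_right_eq_Icc, Finset.sum_Ico_eq_sum_range]
  norm_num

lemma conv_eq (n m : ℕ) (c : ℕ → ℕ → ℝ) (t : ℝ) :
    ∑ k ∈ range (n+m+1), (∑ i ∈ range (n+1), ∑ j ∈ range (m+1),
        if i + j = k then c i j else 0) * t ^ (2*k)
      = ∑ i ∈ range (n+1), ∑ j ∈ range (m+1), c i j * t ^ (2*(i+j)) := by
  simp only [Finset.sum_mul, ite_mul, zero_mul]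
  rw [Finset.sum_comm]
  refine Finset.sum_congr rfl fun i hi => ?_
  rw [Finset.sum_comm]
  refine Finset.sum_congr rfl fun j hj => ?_
  rw [Finset.sum_ite_eq (range (n+m+1)) (i+j) (fun k => c i j * t ^ (2*k)), if_pos]
  simp only [mem_range] at hi hj ⊢
  omega

lemma conv_eq' (n : ℕ) (c : ℕ → ℕ → ℝ) (t : ℝ) :
    ∑ k ∈ range (2*n+2), (∑ i ∈ range (n+1), ∑ j ∈ range (n+1),
        if i + j + 1 = k then c i j else 0) * t ^ (2*k)
      = ∑ i ∈ range (n+1), ∑ j ∈ range (n+1), c i j * t ^ (2*(i+j+1)) := by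
  simp only [Finset.sum_mul, ite_mul, zero_mul]
  rw [Finset.sum_comm]
  refine Finset.sum_congr rfl fun i hi => ?_
  rw [Finset.sum_comm]
  refine Finset.sum_congr rfl fun j hj => ?_
  rw [Finset.sum_ite_eq (range (2*n+2)) (i+j+1) (fun k => c i j * t ^ (2*k)), if_pos]
  simp only [mem_range] at hi hj ⊢
  omega

lemma topP (n m : ℕ) (c : ℕ → ℕ → ℝ) :
    ∑ i ∈ range (n+1), ∑ j ∈ range (m+1), (if i + j = n + m then c i j else 0) = c n m := by
  rw [Finset.sum_eq_single n]
  · rw [Finset.sum_eq_single m]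
    · simp
    · intro j hj hne
      rw [if_neg]
      simp only [mem_range] at hj
      omega
    · intro h
      simp at h
  · intro i hi hne
    apply Finset.sum_eq_zero
    intro j hj
    rw [if_neg]
    simp only [mem_range] at hi hj
    omega
  · intro h
    simp at h

lemma topQ (n : ℕ) (c : ℕ → ℕ → ℝ) :
    ∑ i ∈ range (n+1), ∑ j ∈ range (n+1), (if i + j + 1 = 2*n + 1 then c i j else 0) = c n n := by
  rw [Finset.sum_eq_single n]
  · rw [Finset.sum_eq_single n]
    · rw [if_pos (by omega)]
    · intro j hj hne
      rw [if_neg]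
      simp only [mem_range] at hj
      omega
    · intro h
      simp at h
  · intro i hi hne
    apply Finset.sum_eq_zero
    intro j hj
    rw [if_neg]
    simp only [mem_range] at hi hj
    omega
  · intro h
    simp at h

theorem stmt_0 (d : ℕ) (hd : 2 ≤ d) (t : ℝ) :
    A d t * M d t - (B d t) ^ 2 =
      ((d : ℝ) - 1) ^ 2 * ∑ k ∈ Finset.range (2 * d - 3), a d k * t ^ (2 * k) := by
  obtain ⟨e, rfl⟩ : ∃ e, d = e + 2 := ⟨d - 2, by omega⟩
  have hd1 : e + 2 - 1 = e + 1 := rfl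
  have hd2 : e + 2 - 2 = e := rfl
  have hd3 : 2 * (e + 2) - 3 = 2 * e + 1 := by omega
  -- rewrite A
  have hA : A (e+2) t = ((e : ℝ) + 1) ^ 2 * ∑ i ∈ range (e+1), (e.choose i : ℝ) ^ 2 * t ^ (2*i) := by
    unfold A
    rw [hd1, sum_Icc_shift, Finset.mul_sum]
    refine Finset.sum_congr rfl fun i hi => ?_
    have h1 : (((e : ℝ) + 1) * (e.choose i : ℝ)) ^ 2 = (((e+1).choose (i+1) : ℝ) * ((i : ℝ) + 1)) ^ 2 := by
      rw [key]
    have h2 : 1 + i - 1 = i := by omega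
    rw [h2, add_comm 1 i]
    push_cast
    linear_combination (-(t ^ (2*i))) * h1
  -- rewrite B
  have hB : B (e+2) t = ((e : ℝ) + 1) *
      ∑ i ∈ range (e+1), (e.choose i : ℝ) * ((e+1).choose (i+1) : ℝ) * t ^ (2*i+1) := by
    unfold B
    rw [hd1, sum_Icc_shift, Finset.mul_sum]
    refine Finset.sum_congr rfl fun i hi => ?_
    have h1 : ((i : ℝ) + 1) * ((e+1).choose (i+1) : ℝ) = ((e : ℝ) + 1) * (e.choose i : ℝ) := by
      rw [key]; ring
    have h2 : 2 * (1 + i) - 1 = 2*i + 1 := by omega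
    rw [h2, add_comm 1 i]
    push_cast
    linear_combination (((e+1).choose (i+1) : ℝ) * t ^ (2*i+1)) * h1
  have hM : M (e+2) t = ∑ j ∈ range (e+2), ((e+1).choose j : ℝ) ^ 2 * t ^ (2*j) := by
    unfold M
    rw [hd1]
  rw [hA, hB, hM, hd3]
  have hcast : ((↑(e+2) : ℝ) - 1) = (e : ℝ) + 1 := by push_cast; ring
  rw [hcast]
  set SA := ∑ i ∈ range (e+1), (e.choose i : ℝ) ^ 2 * t ^ (2*i) with hSA
  set SM := ∑ j ∈ range (e+2), ((e+1).choose j : ℝ) ^ 2 * t ^ (2*j) with hSM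
  set SB := ∑ i ∈ range (e+1), (e.choose i : ℝ) * ((e+1).choose (i+1) : ℝ) * t ^ (2*i+1) with hSB
  suffices h : SA * SM - SB ^ 2 = ∑ k ∈ range (2*e+1), a (e+2) k * t ^ (2*k) by
    linear_combination (((e : ℝ) + 1) ^ 2) * h
  -- unfold a
  have ha : ∀ k, a (e+2) k =
      (∑ i ∈ range (e+2), ∑ j ∈ range (e+1),
        if i + j = k then ((e+1).choose i : ℝ) ^ 2 * (e.choose j : ℝ) ^ 2 else 0)
      - (∑ i ∈ range (e+1), ∑ j ∈ range (e+1),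
        if i + j + 1 = k then
          (e.choose i : ℝ) * ((e+1).choose (i+1) : ℝ) * (e.choose j : ℝ) * ((e+1).choose (j+1) : ℝ)
        else 0) := by
    intro k
    unfold a
    rw [hd1, hd2]
  simp only [ha, sub_mul, Finset.sum_sub_distrib]
  -- extend both sums from range (2e+1) to range (2e+2): the extra terms cancel
  have hP := Finset.sum_range_succ (fun k => (∑ i ∈ range (e+2), ∑ j ∈ range (e+1),
        if i + j = k then ((e+1).choose i : ℝ) ^ 2 * (e.choose j : ℝ) ^ 2 else 0) * t ^ (2*k)) (2*e+1)
  have hQ := Finset.sum_range_succ (fun k => (∑ i ∈ range (e+1), ∑ j ∈ range (e+1),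
        if i + j + 1 = k then
          (e.choose i : ℝ) * ((e+1).choose (i+1) : ℝ) * (e.choose j : ℝ) * ((e+1).choose (j+1) : ℝ)
        else 0) * t ^ (2*k)) (2*e+1)
  have htopP : (∑ i ∈ range (e+2), ∑ j ∈ range (e+1),
      if i + j = 2*e+1 then ((e+1).choose i : ℝ) ^ 2 * (e.choose j : ℝ) ^ 2 else 0) = 1 := by
    have := topP (e+1) e (fun i j => ((e+1).choose i : ℝ) ^ 2 * (e.choose j : ℝ) ^ 2)
    simp only [Nat.choose_self, Nat.cast_one, one_pow, mul_one] at this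
    rw [show (e+1) + e = 2*e+1 by omega] at this
    rw [show e + 1 + 1 = e + 2 from rfl] at this
    exact this
  have htopQ : (∑ i ∈ range (e+1), ∑ j ∈ range (e+1),
      if i + j + 1 = 2*e+1 then
        (e.choose i : ℝ) * ((e+1).choose (i+1) : ℝ) * (e.choose j : ℝ) * ((e+1).choose (j+1) : ℝ)
      else 0) = 1 := by
    have := topQ e (fun i j =>
      (e.choose i : ℝ) * ((e+1).choose (i+1) : ℝ) * (e.choose j : ℝ) * ((e+1).choose (j+1) : ℝ))
    simpa using this
  rw [htopP] at hP
  rw [htopQ] at hQ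
  have hconv1 := conv_eq (e+1) e (fun i j => ((e+1).choose i : ℝ) ^ 2 * (e.choose j : ℝ) ^ 2) t
  have hconv2 := conv_eq' e (fun i j =>
      (e.choose i : ℝ) * ((e+1).choose (i+1) : ℝ) * (e.choose j : ℝ) * ((e+1).choose (j+1) : ℝ)) t
  rw [show (e+1) + e + 1 = 2*e+2 by omega] at hconv1
  rw [show e + 1 + 1 = e + 2 from rfl] at hconv1
  -- express LHS as double sums
  have hL1 : SA * SM = ∑ i ∈ range (e+2), ∑ j ∈ range (e+1),
      ((e+1).choose i : ℝ) ^ 2 * (e.choose j : ℝ) ^ 2 * t ^ (2*(i+j)) := by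
    rw [hSA, hSM, Finset.sum_mul_sum, Finset.sum_comm]
    refine Finset.sum_congr rfl fun i hi => Finset.sum_congr rfl fun j hj => ?_
    rw [show 2*(i+j) = 2*j + 2*i by ring, pow_add]
    ring
  have hL2 : SB ^ 2 = ∑ i ∈ range (e+1), ∑ j ∈ range (e+1),
      (e.choose i : ℝ) * ((e+1).choose (i+1) : ℝ) * (e.choose j : ℝ) * ((e+1).choose (j+1) : ℝ)
        * t ^ (2*(i+j+1)) := by
    rw [sq, hSB, Finset.sum_mul_sum]
    refine Finset.sum_congr rfl fun i hi => Finset.sum_congr rfl fun j hj => ?_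
    rw [show 2*(i+j+1) = (2*i+1) + (2*j+1) by ring, pow_add]
    ring
  rw [hL1, hL2, ← hconv1, ← hconv2, hP, hQ]
  ring
end

section
/- For every integer d ≥ 2 and every integer k with 0 ≤ k ≤ 2d−4, a_{2d−4−k} = a_k. -/
open Finset MeasureTheory

noncomputable def bb (e k : ℕ) : ℝ :=
  ∑ x ∈ Finset.range (e+2) ×ˢ Finset.range (e+2),
    if x.1 + x.2 = k + 1 then
      ((x.1 : ℝ) - (x.2 : ℝ))^2 * ((e+1).choose x.1 : ℝ)^2 * ((e+1).choose x.2 : ℝ)^2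
    else 0

lemma key_id (e j : ℕ) : ((j:ℝ)+1) * ((e+1).choose (j+1) : ℝ) = ((e:ℝ)+1) * (e.choose j : ℝ) := by
  have h : ((e+1) * e.choose j : ℕ) = ((e+1).choose (j+1) * (j+1) : ℕ) := Nat.add_one_mul_choose_eq e j
  rw [mul_comm]
  exact_mod_cast h.symm

lemma inner1 (e k q : ℕ) (C : ℝ) :
    (∑ p ∈ range (e+2), if p + q = k + 1 then (p:ℝ)^2 * ((e+1).choose p:ℝ)^2 * C else 0)
    = ((e:ℝ)+1)^2 * ∑ j ∈ range (e+1), if j + q = k then (e.choose j:ℝ)^2 * C else 0 := by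
  rw [Finset.sum_range_succ', Finset.mul_sum]
  have h0 : (if 0 + q = k + 1 then ((0:ℕ):ℝ)^2 * ((e+1).choose 0:ℝ)^2 * C else 0) = 0 := by
    split <;> simp
  rw [h0, add_zero]
  refine Finset.sum_congr rfl fun j _ => ?_
  have hc : (j + 1 + q = k + 1) ↔ (j + q = k) := by omega
  rw [if_congr hc rfl rfl]
  split
  · have h := key_id e j
    push_cast
    calc ((j:ℝ)+1)^2 * ((e+1).choose (j+1):ℝ)^2 * C
        = (((j:ℝ)+1) * ((e+1).choose (j+1):ℝ))^2 * C := by ring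
      _ = (((e:ℝ)+1) * (e.choose j:ℝ))^2 * C := by rw [h]
      _ = ((e:ℝ)+1)^2 * ((e.choose j:ℝ)^2 * C) := by ring
  · simp

lemma inner2 (e k p : ℕ) (C : ℝ) :
    (∑ q ∈ range (e+2), if p + q = k + 1 then C * ((q:ℝ) * ((e+1).choose q:ℝ)^2) else 0)
    = ((e:ℝ)+1) * ∑ j ∈ range (e+1),
        if p + j = k then C * ((e.choose j:ℝ) * ((e+1).choose (j+1):ℝ)) else 0 := by
  rw [Finset.sum_range_succ', Finset.mul_sum]
  have h0 : (if p + 0 = k + 1 then C * (((0:ℕ):ℝ) * ((e+1).choose 0:ℝ)^2) else 0) = 0 := by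
    split <;> simp
  rw [h0, add_zero]
  refine Finset.sum_congr rfl fun j _ => ?_
  have hc : (p + (j + 1) = k + 1) ↔ (p + j = k) := by omega
  rw [if_congr hc rfl rfl]
  split
  · have h := key_id e j
    push_cast
    calc C * ((((j:ℝ))+1) * ((e+1).choose (j+1):ℝ)^2)
        = C * ((((j:ℝ)+1) * ((e+1).choose (j+1):ℝ)) * ((e+1).choose (j+1):ℝ)) := by ring
      _ = C * ((((e:ℝ)+1) * (e.choose j:ℝ)) * ((e+1).choose (j+1):ℝ)) := by rw [h]
      _ = ((e:ℝ)+1) * (C * ((e.choose j:ℝ) * ((e+1).choose (j+1):ℝ))) := by ring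
  · simp

lemma inner3 (e k j : ℕ) (C : ℝ) :
    (∑ p ∈ range (e+2), if p + j = k then ((p:ℝ) * ((e+1).choose p:ℝ)^2) * C else 0)
    = ((e:ℝ)+1) * ∑ i ∈ range (e+1),
        if i + j + 1 = k then ((e.choose i:ℝ) * ((e+1).choose (i+1):ℝ)) * C else 0 := by
  rw [Finset.sum_range_succ', Finset.mul_sum]
  have h0 : (if 0 + j = k then (((0:ℕ):ℝ) * ((e+1).choose 0:ℝ)^2) * C else 0) = 0 := by
    split <;> simp
  rw [h0, add_zero]
  refine Finset.sum_congr rfl fun i _ => ?_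
  have hc : (i + 1 + j = k) ↔ (i + j + 1 = k) := by omega
  rw [if_congr hc rfl rfl]
  split
  · have h := key_id e i
    push_cast
    calc (((i:ℝ)+1) * ((e+1).choose (i+1):ℝ)^2) * C
        = ((((i:ℝ)+1) * ((e+1).choose (i+1):ℝ)) * ((e+1).choose (i+1):ℝ)) * C := by ring
      _ = ((((e:ℝ)+1) * (e.choose i:ℝ)) * ((e+1).choose (i+1):ℝ)) * C := by rw [h]
      _ = ((e:ℝ)+1) * (((e.choose i:ℝ) * ((e+1).choose (i+1):ℝ)) * C) := by ring
  · simp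

lemma bb_eq (e k : ℕ) : bb e k = 2 * ((e:ℝ)+1)^2 * a (e+2) k := by
  have hsplit : ∀ p q : ℕ, (if p + q = k + 1 then
      ((p : ℝ) - (q : ℝ))^2 * ((e+1).choose p : ℝ)^2 * ((e+1).choose q : ℝ)^2 else 0)
    = ((if p + q = k + 1 then (p:ℝ)^2 * ((e+1).choose p : ℝ)^2 * ((e+1).choose q : ℝ)^2 else 0)
      + (if p + q = k + 1 then (q:ℝ)^2 * ((e+1).choose p : ℝ)^2 * ((e+1).choose q : ℝ)^2 else 0))
      - 2 * (if p + q = k + 1 then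
          ((p:ℝ) * ((e+1).choose p : ℝ)^2) * ((q:ℝ) * ((e+1).choose q : ℝ)^2) else 0) := by
    intro p q; split <;> ring
  rw [bb, Finset.sum_product]
  simp only [hsplit, Finset.sum_add_distrib, Finset.sum_sub_distrib, ← Finset.mul_sum]
  have hswap : (∑ p ∈ range (e+2), ∑ q ∈ range (e+2),
      if p + q = k + 1 then (q:ℝ)^2 * ((e+1).choose p : ℝ)^2 * ((e+1).choose q : ℝ)^2 else 0)
    = ∑ p ∈ range (e+2), ∑ q ∈ range (e+2),
      if p + q = k + 1 then (p:ℝ)^2 * ((e+1).choose p : ℝ)^2 * ((e+1).choose q : ℝ)^2 else 0 := by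
    rw [Finset.sum_comm]
    refine Finset.sum_congr rfl fun p _ => Finset.sum_congr rfl fun q _ => ?_
    have hc : (q + p = k + 1) ↔ (p + q = k + 1) := by omega
    rw [if_congr hc rfl rfl]
    split <;> ring
  rw [hswap]
  have hE1 : (∑ p ∈ range (e+2), ∑ q ∈ range (e+2),
      if p + q = k + 1 then (p:ℝ)^2 * ((e+1).choose p : ℝ)^2 * ((e+1).choose q : ℝ)^2 else 0)
    = ((e:ℝ)+1)^2 * ∑ i ∈ range (e+2), ∑ j ∈ range (e+1),
        if i + j = k then ((e+1).choose i : ℝ)^2 * (e.choose j : ℝ)^2 else 0 := by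
    calc (∑ p ∈ range (e+2), ∑ q ∈ range (e+2),
        if p + q = k + 1 then (p:ℝ)^2 * ((e+1).choose p : ℝ)^2 * ((e+1).choose q : ℝ)^2 else 0)
        = ∑ q ∈ range (e+2), ∑ p ∈ range (e+2),
          if p + q = k + 1 then (p:ℝ)^2 * ((e+1).choose p : ℝ)^2 * ((e+1).choose q : ℝ)^2
          else 0 := Finset.sum_comm
      _ = ∑ q ∈ range (e+2), ((e:ℝ)+1)^2 * ∑ j ∈ range (e+1),
          if j + q = k then (e.choose j:ℝ)^2 * ((e+1).choose q : ℝ)^2 else 0 :=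
          Finset.sum_congr rfl fun q _ => inner1 e k q _
      _ = ((e:ℝ)+1)^2 * ∑ q ∈ range (e+2), ∑ j ∈ range (e+1),
          if j + q = k then (e.choose j:ℝ)^2 * ((e+1).choose q : ℝ)^2 else 0 :=
          (Finset.mul_sum _ _ _).symm
      _ = ((e:ℝ)+1)^2 * ∑ i ∈ range (e+2), ∑ j ∈ range (e+1),
          if i + j = k then ((e+1).choose i : ℝ)^2 * (e.choose j : ℝ)^2 else 0 := by
          congr 1
          refine Finset.sum_congr rfl fun i _ => Finset.sum_congr rfl fun j _ => ?_
          have hc : (j + i = k) ↔ (i + j = k) := by omega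
          rw [if_congr hc rfl rfl]
          split <;> ring
  rw [hE1]
  have hCross : (∑ p ∈ range (e+2), ∑ q ∈ range (e+2),
      if p + q = k + 1 then ((p:ℝ) * ((e+1).choose p : ℝ)^2) * ((q:ℝ) * ((e+1).choose q : ℝ)^2)
      else 0)
    = ((e:ℝ)+1)^2 * ∑ i ∈ range (e+1), ∑ j ∈ range (e+1),
        if i + j + 1 = k then
          (e.choose i : ℝ) * ((e+1).choose (i+1) : ℝ) * (e.choose j : ℝ)
            * ((e+1).choose (j+1) : ℝ) else 0 := by
    calc (∑ p ∈ range (e+2), ∑ q ∈ range (e+2),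
        if p + q = k + 1 then ((p:ℝ) * ((e+1).choose p : ℝ)^2) * ((q:ℝ) * ((e+1).choose q : ℝ)^2)
        else 0)
        = ∑ p ∈ range (e+2), ((e:ℝ)+1) * ∑ j ∈ range (e+1),
            if p + j = k then ((p:ℝ) * ((e+1).choose p : ℝ)^2)
              * ((e.choose j:ℝ) * ((e+1).choose (j+1):ℝ)) else 0 :=
          Finset.sum_congr rfl fun p _ => inner2 e k p _
      _ = ((e:ℝ)+1) * ∑ p ∈ range (e+2), ∑ j ∈ range (e+1),
            if p + j = k then ((p:ℝ) * ((e+1).choose p : ℝ)^2)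
              * ((e.choose j:ℝ) * ((e+1).choose (j+1):ℝ)) else 0 :=
          (Finset.mul_sum _ _ _).symm
      _ = ((e:ℝ)+1) * ∑ j ∈ range (e+1), ∑ p ∈ range (e+2),
            if p + j = k then ((p:ℝ) * ((e+1).choose p : ℝ)^2)
              * ((e.choose j:ℝ) * ((e+1).choose (j+1):ℝ)) else 0 := by
          rw [Finset.sum_comm]
      _ = ((e:ℝ)+1) * ∑ j ∈ range (e+1), ((e:ℝ)+1) * ∑ i ∈ range (e+1),
            if i + j + 1 = k then ((e.choose i:ℝ) * ((e+1).choose (i+1):ℝ))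
              * ((e.choose j:ℝ) * ((e+1).choose (j+1):ℝ)) else 0 := by
          congr 1
          exact Finset.sum_congr rfl fun j _ => inner3 e k j _
      _ = ((e:ℝ)+1)^2 * ∑ j ∈ range (e+1), ∑ i ∈ range (e+1),
            if i + j + 1 = k then ((e.choose i:ℝ) * ((e+1).choose (i+1):ℝ))
              * ((e.choose j:ℝ) * ((e+1).choose (j+1):ℝ)) else 0 := by
          rw [← Finset.mul_sum]; ring
      _ = ((e:ℝ)+1)^2 * ∑ i ∈ range (e+1), ∑ j ∈ range (e+1),
            if i + j + 1 = k then
              (e.choose i : ℝ) * ((e+1).choose (i+1) : ℝ) * (e.choose j : ℝ)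
                * ((e+1).choose (j+1) : ℝ) else 0 := by
          congr 1
          rw [Finset.sum_comm]
          refine Finset.sum_congr rfl fun i _ => Finset.sum_congr rfl fun j _ => ?_
          split <;> ring
  rw [hCross]
  have ha : a (e+2) k
      = (∑ i ∈ range (e+2), ∑ j ∈ range (e+1),
          if i + j = k then ((e+1).choose i : ℝ)^2 * (e.choose j : ℝ)^2 else 0)
        - ∑ i ∈ range (e+1), ∑ j ∈ range (e+1),
          if i + j + 1 = k then
            (e.choose i : ℝ) * ((e+1).choose (i+1) : ℝ) * (e.choose j : ℝ)
              * ((e+1).choose (j+1) : ℝ) else 0 := by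
    simp only [a, show e+2-1 = e+1 from rfl, show e+2-2 = e from rfl]
  rw [ha]
  ring

lemma bb_symm (e k : ℕ) (hk : k ≤ 2*e) : bb e (2*e - k) = bb e k := by
  unfold bb
  refine Finset.sum_nbij' (fun x => (e+1-x.2, e+1-x.1)) (fun x => (e+1-x.2, e+1-x.1))
    ?_ ?_ ?_ ?_ ?_
  · rintro ⟨p, q⟩ hx
    simp only [Finset.mem_product, Finset.mem_range] at hx ⊢
    omega
  · rintro ⟨p, q⟩ hx
    simp only [Finset.mem_product, Finset.mem_range] at hx ⊢
    omega
  · rintro ⟨p, q⟩ hx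
    simp only [Finset.mem_product, Finset.mem_range] at hx
    simp only [Prod.mk.injEq]
    omega
  · rintro ⟨p, q⟩ hx
    simp only [Finset.mem_product, Finset.mem_range] at hx
    simp only [Prod.mk.injEq]
    omega
  · rintro ⟨p, q⟩ hx
    simp only [Finset.mem_product, Finset.mem_range] at hx
    obtain ⟨hp, hq⟩ := hx
    have hp' : p ≤ e+1 := by omega
    have hq' : q ≤ e+1 := by omega
    have hc : (p + q = 2*e - k + 1) ↔ ((e+1-q) + (e+1-p) = k + 1) := by omega
    rw [if_congr hc rfl rfl]
    by_cases h : (e+1-q) + (e+1-p) = k + 1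
    · simp only [if_pos h]
      rw [Nat.choose_symm hq', Nat.choose_symm hp']
      rw [Nat.cast_sub hq', Nat.cast_sub hp']
      push_cast
      ring
    · simp [h]

theorem stmt_1 (d : ℕ) (hd : 2 ≤ d) (k : ℕ) (hk : k ≤ 2 * d - 4) :
    a d (2 * d - 4 - k) = a d k := by
  obtain ⟨e, rfl⟩ : ∃ e, d = e + 2 := ⟨d - 2, by omega⟩
  have h1 : 2 * (e + 2) - 4 - k = 2 * e - k := by omega
  have hk' : k ≤ 2 * e := by omega
  rw [h1]
  have h2 := bb_eq e (2 * e - k)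
  have h3 := bb_eq e k
  have h4 := bb_symm e k hk'
  have hne : (2 : ℝ) * ((e:ℝ)+1)^2 ≠ 0 := by positivity
  have := h2.symm.trans (h4.trans h3)
  exact mul_left_cancel₀ hne this
end

section
/- For every integer d ≥ 2, a_0 = 1, a_{2d−4} = 1, and a_k ≥ 1 for every integer k with 0 ≤ k ≤ 2d−4. -/
open Finset MeasureTheory

/-!
With `e = d - 2` and `v i = C(e+1,i) C(e,k-i)`, the index shift `i ↦ i + 1` turns the defining
sums into `a_k = ∑_{i ≤ k} v_i² - ∑_{i=1}^{k} v_i v_{k+1-i}`. Since `i ↦ k + 1 - i` permutes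
`{1, …, k}`, this is `2 a_k = 2 v_0² + ∑_{i=1}^{k} (v_i - v_{k+1-i})²`. For `k ≤ e` the term
`v_0 = C(e,k)` is at least `1`. For `k = e + s + 1 ≤ 2e`, Pascal's rule gives
`v_{s+1} - v_{e+1} = C(e,s+1) ≥ 1`, and this difference occurs twice in the sum of squares. At
`k = 2e` these two are the only nonzero squares, and they equal `1`.
-/

theorem Finset.sum_range_sum_range_ite_add_eq {β : Type*} [AddCommMonoid β] (m n k : ℕ)
    (g : ℕ → ℕ → β) (hg : ∀ i j, i + j = k → m ≤ i ∨ n ≤ j → g i j = 0) :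
    ∑ i ∈ range m, ∑ j ∈ range n, (if i + j = k then g i j else 0) =
      ∑ p ∈ antidiagonal k, g p.1 p.2 := by
  rw [← sum_product', ← sum_filter]
  refine sum_subset (fun p hp ↦ by simp_all) fun p hp hp' ↦ hg p.1 p.2 (by simpa using hp) ?_
  simp only [mem_filter, mem_product, mem_range, HasAntidiagonal.mem_antidiagonal] at hp hp'
  omega

theorem two_mul_sum_sq_sub_sum_mul_reflect (v : ℕ → ℝ) (k : ℕ) :
    2 * (∑ i ∈ range (k + 1), v i ^ 2 - ∑ i ∈ range k, v (i + 1) * v (k - i)) =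
      2 * v 0 ^ 2 + ∑ i ∈ range k, (v (i + 1) - v (k - i)) ^ 2 := by
  have hreflect : ∑ i ∈ range k, v (k - i) ^ 2 = ∑ i ∈ range k, v (i + 1) ^ 2 := by
    rw [← sum_range_reflect (fun i ↦ v (i + 1) ^ 2)]
    refine sum_congr rfl fun i hi ↦ ?_
    rw [mem_range] at hi
    congr 2
    omega
  simp only [sub_sq, sum_add_distrib, sum_sub_distrib, sum_range_succ', hreflect, mul_assoc,
    ← mul_sum]
  ring

/-- A term of Vandermonde's convolution for `C(2e+1,k)`; junk for `i > k`, where `k - i`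
truncates to `0`. -/
noncomputable def vandermondeTerm (e k i : ℕ) : ℝ :=
  ((e + 1).choose i : ℝ) * (e.choose (k - i) : ℝ)

lemma vandermondeTerm_of_lt {e k i : ℕ} (h : e + 1 < i) : vandermondeTerm e k i = 0 := by
  simp [vandermondeTerm, Nat.choose_eq_zero_of_lt h]

lemma vandermondeTerm_of_add_lt {e k i : ℕ} (h : i + e < k) : vandermondeTerm e k i = 0 := by
  simp [vandermondeTerm, Nat.choose_eq_zero_of_lt (show e < k - i by omega)]

lemma a_eq_sum_vandermondeTerm (e k : ℕ) :
    a (e + 2) k = ∑ i ∈ range (k + 1), vandermondeTerm e k i ^ 2 -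
      ∑ i ∈ range k, vandermondeTerm e k (i + 1) * vandermondeTerm e k (k - i) := by
  have hsq : ∑ i ∈ range (e + 2), ∑ j ∈ range (e + 1),
      (if i + j = k then ((e + 1).choose i : ℝ) ^ 2 * (e.choose j : ℝ) ^ 2 else 0) =
        ∑ i ∈ range (k + 1), vandermondeTerm e k i ^ 2 := by
    rw [sum_range_sum_range_ite_add_eq _ _ _ _ fun i j _ h ↦ by
        rcases h with h | h <;> simp [Nat.choose_eq_zero_of_lt (show _ < _ from h)],
      Nat.sum_antidiagonal_eq_sum_range_succ_mk]
    simp only [vandermondeTerm, mul_pow]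
  have hmul : ∑ i ∈ range (e + 1), ∑ j ∈ range (e + 1),
      (if i + j + 1 = k then (e.choose i : ℝ) * ((e + 1).choose (i + 1) : ℝ) *
        (e.choose j : ℝ) * ((e + 1).choose (j + 1) : ℝ) else 0) =
        ∑ i ∈ range k, vandermondeTerm e k (i + 1) * vandermondeTerm e k (k - i) := by
    cases k with
    | zero => simp
    | succ k =>
      simp only [Nat.add_right_cancel_iff]
      rw [sum_range_sum_range_ite_add_eq _ _ _ _ fun i j _ h ↦ by
          rcases h with h | h <;> simp [Nat.choose_eq_zero_of_lt (show _ < _ from h)],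
        Nat.sum_antidiagonal_eq_sum_range_succ_mk]
      refine sum_congr rfl fun i hi ↦ ?_
      rw [mem_range] at hi
      rw [vandermondeTerm, vandermondeTerm, show k + 1 - i = k - i + 1 by omega,
        show k + 1 - (i + 1) = k - i by omega, show k + 1 - (k - i + 1) = i by omega]
      ring
  exact congrArg₂ (· - ·) hsq hmul

lemma two_mul_a_eq (e k : ℕ) :
    2 * a (e + 2) k = 2 * vandermondeTerm e k 0 ^ 2 +
      ∑ i ∈ range k, (vandermondeTerm e k (i + 1) - vandermondeTerm e k (k - i)) ^ 2 := by
  rw [a_eq_sum_vandermondeTerm, two_mul_sum_sq_sub_sum_mul_reflect]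

lemma a_zero (e : ℕ) : a (e + 2) 0 = 1 := by
  simp [a_eq_sum_vandermondeTerm, vandermondeTerm]

section
variable (e s : ℕ)

lemma vandermondeTerm_sub_vandermondeTerm :
    vandermondeTerm e (e + s + 1) (s + 1) - vandermondeTerm e (e + s + 1) (e + 1) =
      e.choose (s + 1) := by
  simp only [vandermondeTerm, show e + s + 1 - (s + 1) = e by omega,
    show e + s + 1 - (e + 1) = s by omega, Nat.choose_self, Nat.choose_succ_succ]
  push_cast
  ring

lemma sq_sub_vandermondeTerm_at_left :
    (vandermondeTerm e (e + s + 1) (s + 1) - vandermondeTerm e (e + s + 1) (e + s + 1 - s)) ^ 2 =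
      (e.choose (s + 1) : ℝ) ^ 2 := by
  rw [show e + s + 1 - s = e + 1 by omega, vandermondeTerm_sub_vandermondeTerm]

lemma sq_sub_vandermondeTerm_at_right :
    (vandermondeTerm e (e + s + 1) (e + 1) - vandermondeTerm e (e + s + 1) (e + s + 1 - e)) ^ 2 =
      (e.choose (s + 1) : ℝ) ^ 2 := by
  rw [show e + s + 1 - e = s + 1 by omega, ← vandermondeTerm_sub_vandermondeTerm]
  ring

end

lemma one_le_a (e k : ℕ) (hk : k ≤ 2 * e) : 1 ≤ a (e + 2) k := by
  have h := two_mul_a_eq e k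
  have hsum := sum_nonneg fun i (_ : i ∈ range k) ↦
    sq_nonneg (vandermondeTerm e k (i + 1) - vandermondeTerm e k (k - i))
  rcases le_or_gt k e with hke | hke
  · have hv : (1 : ℝ) ≤ vandermondeTerm e k 0 := by
      simp only [vandermondeTerm, Nat.choose_zero_right, Nat.sub_zero, Nat.cast_one, one_mul]
      exact_mod_cast Nat.choose_pos hke
    nlinarith
  · obtain ⟨s, rfl⟩ : ∃ s, k = e + s + 1 := ⟨k - e - 1, by omega⟩
    have hpair := add_le_sum (fun i (_ : i ∈ range (e + s + 1)) ↦
        sq_nonneg (vandermondeTerm e (e + s + 1) (i + 1) -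
          vandermondeTerm e (e + s + 1) (e + s + 1 - i)))
      (mem_range.2 (by omega : s < e + s + 1)) (mem_range.2 (by omega : e < e + s + 1))
      (by omega : s ≠ e)
    rw [sq_sub_vandermondeTerm_at_left, sq_sub_vandermondeTerm_at_right] at hpair
    have hv : (1 : ℝ) ≤ e.choose (s + 1) := by
      exact_mod_cast Nat.choose_pos (by omega)
    nlinarith [sq_nonneg (vandermondeTerm e (e + s + 1) 0)]

lemma a_two_mul (e : ℕ) : a (e + 2) (2 * e) = 1 := by
  obtain _ | s := e
  · exact a_zero 0
  rw [show 2 * (s + 1) = s + 1 + s + 1 by omega]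
  have h := two_mul_a_eq (s + 1) (s + 1 + s + 1)
  rw [vandermondeTerm_of_add_lt (by omega),
    sum_eq_add_of_mem s (s + 1) (mem_range.2 (by omega)) (mem_range.2 (by omega)) (by omega)
      fun i _ hi ↦ ?_,
    sq_sub_vandermondeTerm_at_left, sq_sub_vandermondeTerm_at_right] at h
  · norm_num at h
    linarith
  · rcases lt_or_gt_of_ne hi.1 with hi' | hi'
    · rw [vandermondeTerm_of_add_lt (by omega), vandermondeTerm_of_lt (by omega)]
      ring
    · rw [vandermondeTerm_of_lt (by omega), vandermondeTerm_of_add_lt (by omega)]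
      ring

theorem stmt_2 (d : ℕ) (hd : 2 ≤ d) :
    a d 0 = 1 ∧ a d (2 * d - 4) = 1 ∧ ∀ k : ℕ, k ≤ 2 * d - 4 → 1 ≤ a d k := by
  obtain ⟨e, rfl⟩ : ∃ e, d = e + 2 := ⟨d - 2, by omega⟩
  rw [show 2 * (e + 2) - 4 = 2 * e by omega]
  exact ⟨a_zero e, a_two_mul e, fun k hk ↦ one_le_a e k hk⟩
end

section
/- For every integer d ≥ 2 and every integer k with 0 ≤ k ≤ 2d−4, a_k = C(d−2,k)² + Σ_{0≤i≤j≤d−2, i+j=k−1} ( C(d−1,i+1)·C(d−2,j) − C(d−2,i)·C(d−1,j+1) )², where C(n,k) = 0 whenever k > n. -/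
open Finset MeasureTheory

lemma key_pt (m k : ℕ) (i j : ℕ) :
    (if i ≤ j ∧ i + j + 1 = k then
        (((m+1).choose (i+1) : ℝ) * (m.choose j : ℝ) -
          (m.choose i : ℝ) * ((m+1).choose (j+1) : ℝ)) ^ 2 else 0)
    + (if j ≤ i ∧ i + j + 1 = k then
        (((m+1).choose (j+1) : ℝ) * (m.choose i : ℝ) -
          (m.choose j : ℝ) * ((m+1).choose (i+1) : ℝ)) ^ 2 else 0)
    = if i + j + 1 = k then
        (((m+1).choose (i+1) : ℝ))^2 * ((m.choose j : ℝ))^2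
        + ((m.choose i : ℝ))^2 * (((m+1).choose (j+1) : ℝ))^2
        - 2 * ((m.choose i : ℝ) * ((m+1).choose (i+1) : ℝ) * (m.choose j : ℝ) * ((m+1).choose (j+1) : ℝ))
      else 0 := by
  by_cases hc : i + j + 1 = k
  · by_cases h1 : i ≤ j
    · by_cases h2 : j ≤ i
      · have : i = j := le_antisymm h1 h2
        subst this
        simp [hc]
        ring
      · simp [hc, h1, h2]
        ring
    · have h2 : j ≤ i := by omega
      simp [hc, h1, h2]
      ring
  · simp [hc]

lemma helper (m k : ℕ) :
    ∑ i ∈ Finset.range (m+1), ∑ j ∈ Finset.range (m+1),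
      (if i ≤ j ∧ i + j + 1 = k then
        (((m+1).choose (i+1) : ℝ) * (m.choose j : ℝ) -
          (m.choose i : ℝ) * ((m+1).choose (j+1) : ℝ)) ^ 2 else 0)
    = (∑ i ∈ Finset.range (m+1), ∑ j ∈ Finset.range (m+1),
        if i + j + 1 = k then (((m+1).choose (i+1) : ℝ))^2 * ((m.choose j : ℝ))^2 else 0)
      - ∑ i ∈ Finset.range (m+1), ∑ j ∈ Finset.range (m+1),
        if i + j + 1 = k then
          (m.choose i : ℝ) * ((m+1).choose (i+1) : ℝ) * (m.choose j : ℝ) * ((m+1).choose (j+1) : ℝ)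
        else 0 := by
  set S := ∑ i ∈ Finset.range (m+1), ∑ j ∈ Finset.range (m+1),
      (if i ≤ j ∧ i + j + 1 = k then
        (((m+1).choose (i+1) : ℝ) * (m.choose j : ℝ) -
          (m.choose i : ℝ) * ((m+1).choose (j+1) : ℝ)) ^ 2 else 0) with hS
  have hswap : S = ∑ i ∈ Finset.range (m+1), ∑ j ∈ Finset.range (m+1),
      (if j ≤ i ∧ i + j + 1 = k then
        (((m+1).choose (j+1) : ℝ) * (m.choose i : ℝ) -
          (m.choose j : ℝ) * ((m+1).choose (i+1) : ℝ)) ^ 2 else 0) := by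
    rw [hS, Finset.sum_comm]
    apply Finset.sum_congr rfl
    intro i _
    apply Finset.sum_congr rfl
    intro j _
    rw [Nat.add_comm j i]
  have h2 : 2 * S = ∑ i ∈ Finset.range (m+1), ∑ j ∈ Finset.range (m+1),
      (if i + j + 1 = k then
        (((m+1).choose (i+1) : ℝ))^2 * ((m.choose j : ℝ))^2
        + ((m.choose i : ℝ))^2 * (((m+1).choose (j+1) : ℝ))^2
        - 2 * ((m.choose i : ℝ) * ((m+1).choose (i+1) : ℝ) * (m.choose j : ℝ) * ((m+1).choose (j+1) : ℝ))
      else 0) := by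
    rw [two_mul]
    nth_rewrite 2 [hswap]
    rw [← Finset.sum_add_distrib]
    apply Finset.sum_congr rfl
    intro i _
    rw [← Finset.sum_add_distrib]
    apply Finset.sum_congr rfl
    intro j _
    exact key_pt m k i j
  have hsplit : ∑ i ∈ Finset.range (m+1), ∑ j ∈ Finset.range (m+1),
      (if i + j + 1 = k then
        (((m+1).choose (i+1) : ℝ))^2 * ((m.choose j : ℝ))^2
        + ((m.choose i : ℝ))^2 * (((m+1).choose (j+1) : ℝ))^2
        - 2 * ((m.choose i : ℝ) * ((m+1).choose (i+1) : ℝ) * (m.choose j : ℝ) * ((m+1).choose (j+1) : ℝ))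
      else 0)
    = (∑ i ∈ Finset.range (m+1), ∑ j ∈ Finset.range (m+1),
        if i + j + 1 = k then (((m+1).choose (i+1) : ℝ))^2 * ((m.choose j : ℝ))^2 else 0)
      + (∑ i ∈ Finset.range (m+1), ∑ j ∈ Finset.range (m+1),
        if i + j + 1 = k then ((m.choose i : ℝ))^2 * (((m+1).choose (j+1) : ℝ))^2 else 0)
      - 2 * ∑ i ∈ Finset.range (m+1), ∑ j ∈ Finset.range (m+1),
        if i + j + 1 = k then
          (m.choose i : ℝ) * ((m+1).choose (i+1) : ℝ) * (m.choose j : ℝ) * ((m+1).choose (j+1) : ℝ)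
        else 0 := by
    simp only [Finset.mul_sum]
    rw [← Finset.sum_add_distrib, ← Finset.sum_sub_distrib]
    apply Finset.sum_congr rfl
    intro i _
    rw [← Finset.sum_add_distrib, ← Finset.sum_sub_distrib]
    apply Finset.sum_congr rfl
    intro j _
    by_cases hc : i + j + 1 = k <;> simp [hc]
  have hsym2 : ∑ i ∈ Finset.range (m+1), ∑ j ∈ Finset.range (m+1),
      (if i + j + 1 = k then ((m.choose i : ℝ))^2 * (((m+1).choose (j+1) : ℝ))^2 else 0)
    = ∑ i ∈ Finset.range (m+1), ∑ j ∈ Finset.range (m+1),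
      (if i + j + 1 = k then (((m+1).choose (i+1) : ℝ))^2 * ((m.choose j : ℝ))^2 else 0) := by
    rw [Finset.sum_comm]
    apply Finset.sum_congr rfl
    intro i _
    apply Finset.sum_congr rfl
    intro j _
    rw [Nat.add_comm j i, mul_comm]
  rw [hsym2] at hsplit
  rw [hsplit] at h2
  linarith

theorem stmt_3 (d : ℕ) (hd : 2 ≤ d) (k : ℕ) (hk : k ≤ 2 * d - 4) :
    a d k = ((d - 2).choose k : ℝ) ^ 2 +
      ∑ i ∈ Finset.range (d - 1), ∑ j ∈ Finset.range (d - 1),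
        if i ≤ j ∧ i + j + 1 = k then
          (((d - 1).choose (i + 1) : ℝ) * ((d - 2).choose j : ℝ) -
            ((d - 2).choose i : ℝ) * ((d - 1).choose (j + 1) : ℝ)) ^ 2
        else 0 := by
  obtain ⟨n, rfl⟩ : ∃ n, d = n + 2 := ⟨d - 2, by omega⟩
  have e1 : n + 2 - 1 = n + 1 := rfl
  have e2 : n + 2 - 2 = n := rfl
  simp only [a, e1, e2]
  rw [helper n k]
  rw [Finset.sum_range_succ']
  have hz : (∑ j ∈ Finset.range (n+1),
      if 0 + j = k then ((n+1).choose 0 : ℝ) ^ 2 * (n.choose j : ℝ) ^ 2 else 0)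
      = (n.choose k : ℝ) ^ 2 := by
    simp only [zero_add, Nat.choose_zero_right, Nat.cast_one, one_pow, one_mul]
    by_cases hkn : k < n + 1
    · rw [Finset.sum_ite_eq' (Finset.range (n+1)) k fun j => (n.choose j : ℝ) ^ 2,
        if_pos (Finset.mem_range.mpr hkn)]
    · have h0 : n.choose k = 0 := Nat.choose_eq_zero_of_lt (by omega)
      rw [h0]
      push_cast
      rw [Finset.sum_eq_zero]
      · ring
      · intro j hj
        rw [if_neg]
        simp only [Finset.mem_range] at hj
        omega
  rw [hz]
  have hfirst : (∑ i ∈ Finset.range (n+1), ∑ j ∈ Finset.range (n+1),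
      if i + 1 + j = k then ((n+1).choose (i+1) : ℝ) ^ 2 * (n.choose j : ℝ) ^ 2 else 0)
      = ∑ i ∈ Finset.range (n+1), ∑ j ∈ Finset.range (n+1),
      if i + j + 1 = k then ((n+1).choose (i+1) : ℝ) ^ 2 * (n.choose j : ℝ) ^ 2 else 0 := by
    apply Finset.sum_congr rfl
    intro i _
    apply Finset.sum_congr rfl
    intro j _
    rw [show i + 1 + j = i + j + 1 by omega]
  rw [hfirst]
  ring
end

section
/- For every integer d ≥ 2 and every real number t > 0, f_d(t)² = (1/(4π² t)) · G_d'(t), where G_d(t) = t·M_d'(t)/M_d(t) and G_d' denotes the derivative of G_d. -/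
open Finset MeasureTheory

/-
Write `G s = s M'(s) / M(s)`. Since `M' = 2 B`, `G = 2 s B / M`, and termwise `(s B)' = 2 s A`;
hence `G'(t) = 4 t (A M - B²) / M²`. Cauchy–Schwarz, pairing `k C(d-1,k) t^(k-1)` with
`C(d-1,k) t^k`, gives `A M - B² ≥ 0`, so the square root in `f` squares away.
-/

lemma M_eq_one_add_sum {d : ℕ} (hd : 0 < d) (t : ℝ) :
    M d t = 1 + ∑ k ∈ Icc 1 (d - 1), ((d - 1).choose k : ℝ) ^ 2 * t ^ (2 * k) := by
  have hrange : range d = insert 0 (Icc 1 (d - 1)) := by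
    ext k
    simp only [mem_range, mem_insert, mem_Icc]
    omega
  rw [M, hrange, sum_insert (by simp)]
  simp

lemma one_le_M {d : ℕ} (hd : 0 < d) (t : ℝ) : 1 ≤ M d t := by
  rw [M_eq_one_add_sum hd]
  refine le_add_of_nonneg_right (sum_nonneg fun k _ => ?_)
  exact mul_nonneg (sq_nonneg _) ((even_two_mul k).pow_nonneg t)

lemma hasDerivAt_M {d : ℕ} (hd : 0 < d) (t : ℝ) : HasDerivAt (M d) (2 * B d t) t := by
  have hsum : HasDerivAt (fun s => ∑ k ∈ Icc 1 (d - 1), ((d - 1).choose k : ℝ) ^ 2 * s ^ (2 * k))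
      (∑ k ∈ Icc 1 (d - 1), ((d - 1).choose k : ℝ) ^ 2 * ((2 * k : ℕ) * t ^ (2 * k - 1))) t :=
    HasDerivAt.fun_sum fun k _ => (hasDerivAt_pow (2 * k) t).const_mul _
  rw [funext (M_eq_one_add_sum hd), B, mul_sum]
  refine (hsum.const_add 1).congr_deriv (sum_congr rfl fun k _ => ?_).symm
  push_cast
  ring

lemma mul_B_eq_sum (d : ℕ) (s : ℝ) :
    s * B d s = ∑ k ∈ Icc 1 (d - 1), (k : ℝ) * ((d - 1).choose k : ℝ) ^ 2 * s ^ (2 * k) := by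
  rw [B, mul_sum]
  refine sum_congr rfl fun k hk => ?_
  rw [← pow_sub_one_mul (n := 2 * k) (by grind) s]
  ring

lemma hasDerivAt_mul_B (d : ℕ) (t : ℝ) :
    HasDerivAt (fun s => s * B d s) (2 * t * A d t) t := by
  have hsum : HasDerivAt
      (fun s => ∑ k ∈ Icc 1 (d - 1), (k : ℝ) * ((d - 1).choose k : ℝ) ^ 2 * s ^ (2 * k))
      (∑ k ∈ Icc 1 (d - 1), (k : ℝ) * ((d - 1).choose k : ℝ) ^ 2 * ((2 * k : ℕ) * t ^ (2 * k - 1))) t :=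
    HasDerivAt.fun_sum fun k _ => (hasDerivAt_pow (2 * k) t).const_mul _
  rw [funext (mul_B_eq_sum d), A, mul_sum]
  refine hsum.congr_deriv (sum_congr rfl fun k hk => ?_)
  have hexp : 2 * k - 1 = 2 * (k - 1) + 1 := by grind
  rw [hexp, pow_succ]
  push_cast
  ring

lemma sq_B_le_A_mul_M {d : ℕ} (hd : 0 < d) (t : ℝ) : B d t ^ 2 ≤ A d t * M d t := by
  have hcs := sum_mul_sq_le_sq_mul_sq (Icc 1 (d - 1))
    (fun k => (k : ℝ) * ((d - 1).choose k : ℝ) * t ^ (k - 1))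
    (fun k => ((d - 1).choose k : ℝ) * t ^ k)
  have hB : B d t = ∑ k ∈ Icc 1 (d - 1),
      (k : ℝ) * ((d - 1).choose k : ℝ) * t ^ (k - 1) * (((d - 1).choose k : ℝ) * t ^ k) := by
    refine sum_congr rfl fun k hk => ?_
    have hexp : 2 * k - 1 = (k - 1) + k := by grind
    rw [hexp, pow_add]
    ring
  have hA : A d t = ∑ k ∈ Icc 1 (d - 1), ((k : ℝ) * ((d - 1).choose k : ℝ) * t ^ (k - 1)) ^ 2 := by
    refine sum_congr rfl fun k _ => ?_
    ring
  have htail : ∑ k ∈ Icc 1 (d - 1), (((d - 1).choose k : ℝ) * t ^ k) ^ 2 ≤ M d t := by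
    rw [M_eq_one_add_sum hd]
    refine le_add_of_nonneg_of_le zero_le_one (le_of_eq (sum_congr rfl fun k _ => ?_))
    ring
  rw [hB, hA]
  exact hcs.trans (mul_le_mul_of_nonneg_left htail (sum_nonneg fun k _ => sq_nonneg _))

theorem stmt_5 (d : ℕ) (hd : 2 ≤ d) (t : ℝ) (ht : 0 < t) :
    (f d t) ^ 2 =
      (1 / (4 * Real.pi ^ 2 * t)) * deriv (fun s : ℝ => s * deriv (M d) s / M d s) t := by
  have hd' : 0 < d := by omega
  have hM : M d t ≠ 0 := (zero_lt_one.trans_le (one_le_M hd' t)).ne'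
  have hG : (fun s : ℝ => s * deriv (M d) s / M d s) = fun s => 2 * (s * B d s) / M d s := by
    funext s
    rw [(hasDerivAt_M hd' s).deriv]
    ring
  have hG' := ((hasDerivAt_mul_B d t).const_mul 2).fun_div (hasDerivAt_M hd' t) hM
  rw [hG, hG'.deriv, f, div_pow, mul_pow, Real.sq_sqrt (sub_nonneg.2 (sq_B_le_A_mul_M hd' t))]
  field_simp
  ring
end

section
/- For every integer d ≥ 2, the function t ↦ f_d(t) is decreasing (antitone) on [0,∞): for all real numbers 0 ≤ s ≤ t, f_d(t) ≤ f_d(s). -/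
open Finset MeasureTheory

/-!
Write `n = d - 1` and `M_d(t) = p(t²)` with `p(u) = ∑ C(n,k)² uᵏ`. Under `u = x / (1 + x)`,
`(1 + x)ⁿ p(u)` becomes `(1/n!) Dⁿ[xⁿ (x + 1)ⁿ]`, which has only real roots by Rolle's theorem,
so `p` splits over `ℝ`; its roots `w` are negative because its coefficients are positive.
In the variable `u = t²`, `A M - B²` is `K(p) = (X p')' p - X p'²`, and
`K(pq) = q² K(p) + p² K(q)`, `K(X - w) = -w`. Hence `(A M - B²) / M² = ∑_w (-w) / (t² - w)²`,
so `f_d(t) = π⁻¹ √(∑_w |w| / (t² + |w|)²)`, visibly decreasing in `t ≥ 0`.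
-/

open Polynomial
open scoped Nat

theorem Nat.choose_mul_descFactorial_mul_descFactorial {n k : ℕ} (hk : k ≤ n) :
    n.choose k * n.descFactorial (n - k) * n.descFactorial k = n ! * n.choose k ^ 2 := by
  rw [Nat.descFactorial_eq_factorial_mul_choose, Nat.descFactorial_eq_factorial_mul_choose,
    Nat.choose_symm hk, ← Nat.choose_mul_factorial_mul_factorial hk]
  ring

theorem Finset.sum_Icc_one_eq_sum_range {β : Type*} [AddCommMonoid β] (n : ℕ) {g : ℕ → β}
    (hg : g 0 = 0) : ∑ k ∈ Icc 1 n, g k = ∑ k ∈ range (n + 1), g k := by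
  rw [range_eq_Ico, sum_eq_sum_Ico_succ_bot n.succ_pos, hg, zero_add]
  rfl

namespace Polynomial

theorem Splits.derivative {p : ℝ[X]} (hp : p.Splits) : p.derivative.Splits := by
  rw [splits_iff_card_roots] at hp ⊢
  have := card_roots_le_derivative p
  have := card_roots' p.derivative
  rw [natDegree_derivative] at this ⊢
  omega

theorem Splits.iterate_derivative {p : ℝ[X]} (hp : p.Splits) (k : ℕ) :
    (Polynomial.derivative^[k] p).Splits := by
  induction k with
  | zero => exact hp
  | succ k ih => rw [Function.iterate_succ_apply']; exact ih.derivative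

theorem Splits.of_eval_eq_one_sub_pow_mul_eval_div {p q : ℝ[X]} {n : ℕ} (hq : q.Splits)
    (hn : q.natDegree ≤ n) (h : ∀ u ≠ 1, p.eval u = (1 - u) ^ n * q.eval (u / (1 - u))) :
    p.Splits := by
  have hm : q.roots.card ≤ n := (splits_iff_card_roots.mp hq).trans_le hn
  have hp : p = C q.leadingCoeff * (1 - X) ^ (n - q.roots.card) *
      (q.roots.map fun z => C (1 + z) * X - C z).prod := by
    refine eq_of_infinite_eval_eq _ _ ((Set.finite_singleton (1 : ℝ)).infinite_compl.mono ?_)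
    intro u (hu : u ≠ 1)
    have hlin : ∀ z : ℝ, (1 - u) * (u / (1 - u) - z) = (1 + z) * u - z := fun z => by
      field_simp [sub_ne_zero.mpr hu.symm]; ring
    have hprod : (q.roots.map fun z => (1 + z) * u - z).prod =
        (1 - u) ^ q.roots.card * (q.roots.map (u / (1 - u) - ·)).prod := by
      simp only [← hlin, Multiset.prod_map_mul, Multiset.map_const', Multiset.prod_replicate]
    simp only [Set.mem_ofPred_eq, h u hu, hq.eval_eq_prod_roots, eval_mul, eval_C, eval_pow,
      eval_sub, eval_one, eval_X, eval_multiset_prod, Multiset.map_map, Function.comp_def, hprod]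
    rw [← Nat.sub_add_cancel hm, pow_add, Nat.add_sub_cancel]
    ring
  rw [hp]
  refine ((Splits.C _).mul ((Splits.of_degree_le_one ?_).pow _)).mul
    (Splits.multisetProd fun g hg => ?_)
  · compute_degree
  · obtain ⟨z, -, rfl⟩ := Multiset.mem_map.mp hg
    exact Splits.of_degree_le_one (by compute_degree)

theorem X_mul_derivative_C_mul_X_pow {R : Type*} [CommSemiring R] (a : R) (k : ℕ) :
    X * derivative (C a * X ^ k) = C (a * k) * X ^ k := by
  cases k with
  | zero => simp
  | succ k =>
    rw [derivative_C_mul_X_pow, Nat.add_sub_cancel, pow_succ]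
    ring

section KacRice

variable {R : Type*} [CommRing R]

/-- `A M - B²` in the variable `u = t²`, when `M(t) = p(t²)`. -/
noncomputable def kacRiceNumerator (p : R[X]) : R[X] :=
  derivative (X * derivative p) * p - X * derivative p ^ 2

theorem kacRiceNumerator_mul (p q : R[X]) :
    kacRiceNumerator (p * q) = q ^ 2 * kacRiceNumerator p + p ^ 2 * kacRiceNumerator q := by
  simp only [kacRiceNumerator, derivative_mul, derivative_add, derivative_X]
  ring

@[simp]
theorem kacRiceNumerator_C (a : R) : kacRiceNumerator (C a) = 0 := by
  simp [kacRiceNumerator]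

@[simp]
theorem kacRiceNumerator_X_sub_C (a : R) : kacRiceNumerator (X - C a) = -C a := by
  simp [kacRiceNumerator]

variable {K : Type*} [Field K]

theorem eval_kacRiceNumerator_multiset_prod (s : Multiset K) {u : K} (hu : ∀ w ∈ s, u ≠ w) :
    (kacRiceNumerator (s.map (X - C ·)).prod).eval u =
      (s.map (u - ·)).prod ^ 2 * (s.map fun w => -w / (u - w) ^ 2).sum := by
  induction s using Multiset.induction_on with
  | empty => simp [kacRiceNumerator]
  | cons w s ih =>
    have hw : u - w ≠ 0 := sub_ne_zero.mpr (hu w (Multiset.mem_cons_self w s))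
    simp only [Multiset.map_cons, Multiset.prod_cons, Multiset.sum_cons, kacRiceNumerator_mul,
      eval_add, eval_mul, eval_pow, kacRiceNumerator_X_sub_C, eval_neg, eval_C, eval_sub, eval_X,
      eval_multiset_prod, Multiset.map_map, Function.comp_def,
      ih fun v hv => hu v (Multiset.mem_cons_of_mem hv)]
    field_simp

theorem Splits.eval_kacRiceNumerator {p : K[X]} (hp : p.Splits) {u : K} (hu : p.eval u ≠ 0) :
    (kacRiceNumerator p).eval u = p.eval u ^ 2 * (p.roots.map fun w => -w / (u - w) ^ 2).sum := by
  have hroots : ∀ w ∈ p.roots, u ≠ w := by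
    rintro w hw rfl
    exact hu (isRoot_of_mem_roots hw)
  conv_lhs => rw [hp.eq_prod_roots]
  rw [kacRiceNumerator_mul, kacRiceNumerator_C, eval_add, eval_mul, eval_mul,
    eval_kacRiceNumerator_multiset_prod _ hroots, hp.eval_eq_prod_roots]
  simp only [eval_pow, eval_zero, mul_zero, eval_C, zero_add]
  ring

end KacRice

end Polynomial

noncomputable def chooseSqPoly (n : ℕ) : ℝ[X] :=
  ∑ k ∈ range (n + 1), C ((n.choose k : ℝ) ^ 2) * X ^ k

noncomputable def rodriguesPoly (n : ℕ) : ℝ[X] :=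
  ∑ k ∈ range (n + 1), C ((n.choose k : ℝ) ^ 2) * X ^ k * (X + C 1) ^ (n - k)

theorem iterate_derivative_X_pow_mul_X_add_one_pow (n : ℕ) :
    derivative^[n] (X ^ n * (X + C 1) ^ n : ℝ[X]) = C (n ! : ℝ) * rodriguesPoly n := by
  rw [iterate_derivative_mul, rodriguesPoly, mul_sum]
  refine sum_congr rfl fun k hk => ?_
  have hk : k ≤ n := Nat.lt_succ_iff.mp (mem_range.mp hk)
  rw [iterate_derivative_X_pow_eq_natCast_mul, iterate_derivative_X_add_pow, Nat.sub_sub_self hk,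
    nsmul_eq_mul, nsmul_eq_mul]
  have := congrArg (fun m : ℕ => (m : ℝ[X]))
    (Nat.choose_mul_descFactorial_mul_descFactorial hk)
  push_cast [map_pow, map_natCast] at this ⊢
  linear_combination (X ^ k * (X + C 1) ^ (n - k)) * this

theorem natDegree_rodriguesPoly_le (n : ℕ) : (rodriguesPoly n).natDegree ≤ n := by
  refine natDegree_sum_le_of_forall_le _ _ fun k hk => ?_
  have hk : k ≤ n := Nat.lt_succ_iff.mp (mem_range.mp hk)
  have h₁ : (C ((n.choose k : ℝ) ^ 2) * X ^ k).natDegree ≤ k :=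
    (natDegree_C_mul_le _ _).trans (natDegree_X_pow_le k)
  have h₂ : ((X + C 1 : ℝ[X]) ^ (n - k)).natDegree ≤ n - k :=
    (natDegree_pow_le_of_le _ (natDegree_X_add_C (1 : ℝ)).le).trans (mul_one _).le
  exact natDegree_mul_le.trans (by omega)

theorem eval_chooseSqPoly (n : ℕ) (u : ℝ) :
    (chooseSqPoly n).eval u = ∑ k ∈ range (n + 1), (n.choose k : ℝ) ^ 2 * u ^ k := by
  simp [chooseSqPoly, eval_finsetSum]

theorem eval_chooseSqPoly_eq_one_sub_pow_mul_eval_rodriguesPoly (n : ℕ) {u : ℝ} (hu : u ≠ 1) :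
    (chooseSqPoly n).eval u = (1 - u) ^ n * (rodriguesPoly n).eval (u / (1 - u)) := by
  have hu' : 1 - u ≠ 0 := sub_ne_zero.mpr hu.symm
  simp only [eval_chooseSqPoly, rodriguesPoly, eval_finsetSum, mul_sum, eval_mul, eval_C,
    eval_pow, eval_add, eval_X]
  refine sum_congr rfl fun k hk => ?_
  have hk : k ≤ n := Nat.lt_succ_iff.mp (mem_range.mp hk)
  obtain ⟨j, rfl⟩ := Nat.exists_eq_add_of_le hk
  rw [div_add_one hu', add_sub_cancel, Nat.add_sub_cancel_left, pow_add, div_pow, div_pow, one_pow]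
  field_simp

theorem splits_rodriguesPoly (n : ℕ) : (rodriguesPoly n).Splits := by
  have h := ((Splits.X_pow n).mul ((Splits.X_add_C (1 : ℝ)).pow n)).iterate_derivative n
  rw [iterate_derivative_X_pow_mul_X_add_one_pow] at h
  have h' := h.C_mul (n ! : ℝ)⁻¹
  rwa [← mul_assoc, ← C_mul, inv_mul_cancel₀ (by positivity), C_1, one_mul] at h'

theorem splits_chooseSqPoly (n : ℕ) : (chooseSqPoly n).Splits :=
  (splits_rodriguesPoly n).of_eval_eq_one_sub_pow_mul_eval_div (natDegree_rodriguesPoly_le n)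
    fun _ hu => eval_chooseSqPoly_eq_one_sub_pow_mul_eval_rodriguesPoly n hu

theorem one_le_eval_chooseSqPoly (n : ℕ) {u : ℝ} (hu : 0 ≤ u) :
    1 ≤ (chooseSqPoly n).eval u := by
  rw [eval_chooseSqPoly]
  calc (1 : ℝ) = (n.choose 0 : ℝ) ^ 2 * u ^ 0 := by simp
    _ ≤ _ := single_le_sum (f := fun k => (n.choose k : ℝ) ^ 2 * u ^ k)
        (fun k _ => by positivity) (mem_range.mpr n.succ_pos)

theorem neg_of_mem_roots_chooseSqPoly {n : ℕ} {w : ℝ} (hw : w ∈ (chooseSqPoly n).roots) :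
    w < 0 := by
  by_contra! hw'
  have := one_le_eval_chooseSqPoly n hw'
  rw [isRoot_of_mem_roots hw] at this
  norm_num at this

theorem M_eq_eval_chooseSqPoly (n : ℕ) (t : ℝ) :
    M (n + 1) t = (chooseSqPoly n).eval (t ^ 2) := by
  simp [M, eval_chooseSqPoly, pow_mul]

theorem B_eq_mul_eval_derivative_chooseSqPoly (n : ℕ) (t : ℝ) :
    B (n + 1) t = t * (derivative (chooseSqPoly n)).eval (t ^ 2) := by
  simp only [B, chooseSqPoly, derivative_sum, derivative_C_mul_X_pow, eval_finsetSum, eval_mul,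
    eval_C, eval_pow, eval_X, mul_sum, Nat.add_sub_cancel]
  rw [← sum_Icc_one_eq_sum_range n (by simp)]
  refine sum_congr rfl fun k hk => ?_
  obtain ⟨j, rfl⟩ := Nat.exists_eq_add_of_le' (mem_Icc.mp hk).1
  rw [show 2 * (j + 1) - 1 = 2 * j + 1 by omega, Nat.add_sub_cancel]
  push_cast
  ring

theorem A_eq_eval_derivative_X_mul_derivative_chooseSqPoly (n : ℕ) (t : ℝ) :
    A (n + 1) t = (derivative (X * derivative (chooseSqPoly n))).eval (t ^ 2) := by
  rw [chooseSqPoly, derivative_sum, mul_sum]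
  simp only [X_mul_derivative_C_mul_X_pow]
  simp only [derivative_sum, derivative_C_mul_X_pow, eval_finsetSum,
    eval_mul, eval_C, eval_pow, eval_X, A, Nat.add_sub_cancel]
  rw [← sum_Icc_one_eq_sum_range n (by simp)]
  refine sum_congr rfl fun k _ => ?_
  ring

theorem A_mul_M_sub_B_sq (n : ℕ) (t : ℝ) :
    A (n + 1) t * M (n + 1) t - B (n + 1) t ^ 2 =
      (kacRiceNumerator (chooseSqPoly n)).eval (t ^ 2) := by
  rw [A_eq_eval_derivative_X_mul_derivative_chooseSqPoly, M_eq_eval_chooseSqPoly,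
    B_eq_mul_eval_derivative_chooseSqPoly, kacRiceNumerator]
  simp only [eval_sub, eval_mul, eval_pow, eval_X]
  ring

theorem f_eq_sqrt_sum_roots (n : ℕ) (t : ℝ) :
    f (n + 1) t = 1 / Real.pi *
      √((chooseSqPoly n).roots.map fun w => -w / (t ^ 2 - w) ^ 2).sum := by
  have hM : 0 < (chooseSqPoly n).eval (t ^ 2) :=
    one_pos.trans_le (one_le_eval_chooseSqPoly n (sq_nonneg t))
  rw [f, A_mul_M_sub_B_sq, M_eq_eval_chooseSqPoly,
    (splits_chooseSqPoly n).eval_kacRiceNumerator hM.ne', Real.sqrt_mul' _ ?_, Real.sqrt_sq hM.le]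
  · field_simp
  · exact Multiset.sum_nonneg fun x hx => by
      obtain ⟨w, hw, rfl⟩ := Multiset.mem_map.mp hx
      exact div_nonneg (neg_nonneg.mpr (neg_of_mem_roots_chooseSqPoly hw).le) (sq_nonneg _)

theorem stmt_6 (d : ℕ) (hd : 2 ≤ d) :
    ∀ s t : ℝ, 0 ≤ s → s ≤ t → f d t ≤ f d s := by
  obtain ⟨n, rfl⟩ : ∃ n, d = n + 1 := ⟨d - 1, by omega⟩
  intro s t hs hst
  rw [f_eq_sqrt_sum_roots, f_eq_sqrt_sum_roots]
  gcongr
  refine Multiset.sum_map_le_sum_map _ _ fun w hw => ?_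
  have hw := neg_of_mem_roots_chooseSqPoly hw
  have hsw : 0 < s ^ 2 - w := by linarith [sq_nonneg s]
  exact div_le_div_of_nonneg_left (by linarith) (by positivity) (by gcongr)
end

section
/- For every integer d ≥ 2 and every real number t > 0, f_d(1/t) = t² · f_d(t). -/
open Finset MeasureTheory

/-!
Write `d = n + 1` and `w_k(t) = C(n,k)² t^{2k}`. Then `M = ∑ w_k`, `t B = ∑ k w_k` and
`t² A = ∑ k² w_k`, so `t² (A M - B²)` is the Gram form `(∑ w)(∑ k² w) - (∑ k w)²`. Since
`C(n,k) = C(n,n-k)`, replacing `t` by `1/t` amounts, up to the factor `t^{-2n}` on each `w_k`, to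
replacing `k` by `n - k`, and the Gram form is invariant under `k ↦ n - k`. Hence
`M(1/t) = t^{-2n} M(t)` and `(A M - B²)(1/t) = t^{4-4n} (A M - B²)(t)`, which gives the identity.
-/

theorem sum_mul_sum_sq_sub_sq_const_sub {ι : Type*} (s : Finset ι) (w x : ι → ℝ) (a : ℝ) :
    (∑ i ∈ s, w i) * (∑ i ∈ s, (a - x i) ^ 2 * w i) - (∑ i ∈ s, (a - x i) * w i) ^ 2 =
      (∑ i ∈ s, w i) * (∑ i ∈ s, x i ^ 2 * w i) - (∑ i ∈ s, x i * w i) ^ 2 := by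
  simp only [sub_sq, sub_mul, add_mul, sum_add_distrib, sum_sub_distrib, mul_assoc, ← mul_sum]
  ring

noncomputable def binomSqSum (n : ℕ) (g : ℝ → ℝ) (t : ℝ) : ℝ :=
  ∑ k ∈ range (n + 1), g k * ((n.choose k : ℝ) ^ 2 * t ^ (2 * k))

theorem pow_mul_binomSqSum_inv (n : ℕ) (g : ℝ → ℝ) {t : ℝ} (ht : t ≠ 0) :
    t ^ (2 * n) * binomSqSum n g t⁻¹ = binomSqSum n (fun x => g (n - x)) t := by
  rw [binomSqSum, binomSqSum, mul_sum, ← sum_range_reflect]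
  refine sum_congr rfl fun k hk => ?_
  have hkn : k ≤ n := Nat.lt_succ_iff.mp (mem_range.mp hk)
  have hpow : t ^ (2 * n) * t⁻¹ ^ (2 * (n - k)) = t ^ (2 * k) := by
    rw [inv_pow, ← pow_sub₀ _ ht (by omega)]
    congr 1
    omega
  rw [Nat.add_sub_cancel, Nat.choose_symm hkn, Nat.cast_sub hkn, ← hpow]
  ring

theorem binomSqSum_eq_sum_Icc (n : ℕ) {g : ℝ → ℝ} (hg : g 0 = 0) (t : ℝ) :
    binomSqSum n g t = ∑ k ∈ Icc 1 n, g k * ((n.choose k : ℝ) ^ 2 * t ^ (2 * k)) := by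
  refine (sum_subset (fun k hk => ?_) fun k hk hk' => ?_).symm
  · simp only [mem_Icc, mem_range] at hk ⊢
    omega
  · obtain rfl : k = 0 := by simp only [mem_Icc, mem_range] at hk hk'; omega
    simp [hg]

noncomputable def binomSqGram (n : ℕ) (t : ℝ) : ℝ :=
  binomSqSum n 1 t * binomSqSum n (· ^ 2) t - binomSqSum n id t ^ 2

theorem pow_mul_binomSqGram_inv (n : ℕ) {t : ℝ} (ht : t ≠ 0) :
    (t ^ (2 * n)) ^ 2 * binomSqGram n t⁻¹ = binomSqGram n t := by
  have hreflect : (t ^ (2 * n)) ^ 2 * binomSqGram n t⁻¹ =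
      (t ^ (2 * n) * binomSqSum n 1 t⁻¹) * (t ^ (2 * n) * binomSqSum n (· ^ 2) t⁻¹) -
        (t ^ (2 * n) * binomSqSum n id t⁻¹) ^ 2 := by
    rw [binomSqGram]
    ring
  rw [hreflect, pow_mul_binomSqSum_inv n _ ht, pow_mul_binomSqSum_inv n _ ht,
    pow_mul_binomSqSum_inv n _ ht]
  simpa [binomSqGram, binomSqSum] using sum_mul_sum_sq_sub_sq_const_sub _ _ _ _

theorem M_succ (n : ℕ) (t : ℝ) : M (n + 1) t = binomSqSum n 1 t := by
  simp only [M, binomSqSum, Nat.add_sub_cancel, Pi.one_apply, one_mul]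

theorem mul_B_succ (n : ℕ) (t : ℝ) : t * B (n + 1) t = binomSqSum n id t := by
  rw [B, binomSqSum_eq_sum_Icc n rfl, Nat.add_sub_cancel, mul_sum]
  refine sum_congr rfl fun k hk => ?_
  obtain ⟨j, rfl⟩ : ∃ j, k = j + 1 := ⟨k - 1, by simp only [mem_Icc] at hk; omega⟩
  rw [show 2 * (j + 1) - 1 = 2 * j + 1 by omega, id]
  ring

theorem sq_mul_A_succ (n : ℕ) (t : ℝ) : t ^ 2 * A (n + 1) t = binomSqSum n (· ^ 2) t := by
  rw [A, binomSqSum_eq_sum_Icc n (g := (· ^ 2)) (zero_pow two_ne_zero), Nat.add_sub_cancel,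
    mul_sum]
  refine sum_congr rfl fun k hk => ?_
  obtain ⟨j, rfl⟩ : ∃ j, k = j + 1 := ⟨k - 1, by simp only [mem_Icc] at hk; omega⟩
  rw [Nat.add_sub_cancel]
  ring

theorem sq_mul_discr_eq_binomSqGram (n : ℕ) (t : ℝ) :
    t ^ 2 * (A (n + 1) t * M (n + 1) t - B (n + 1) t ^ 2) = binomSqGram n t := by
  rw [binomSqGram, ← M_succ, ← mul_B_succ, ← sq_mul_A_succ]
  ring

theorem M_succ_inv (n : ℕ) {t : ℝ} (ht : t ≠ 0) :
    M (n + 1) t⁻¹ = M (n + 1) t / t ^ (2 * n) := by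
  rw [eq_div_iff (pow_ne_zero _ ht), mul_comm, M_succ, M_succ, pow_mul_binomSqSum_inv n _ ht]
  rfl

theorem discr_succ_inv (n : ℕ) {t : ℝ} (ht : t ≠ 0) :
    A (n + 1) t⁻¹ * M (n + 1) t⁻¹ - B (n + 1) t⁻¹ ^ 2 =
      (t ^ 2 / t ^ (2 * n)) ^ 2 * (A (n + 1) t * M (n + 1) t - B (n + 1) t ^ 2) := by
  have h := sq_mul_discr_eq_binomSqGram n t
  rw [← pow_mul_binomSqGram_inv n ht, ← sq_mul_discr_eq_binomSqGram] at h
  field_simp at h ⊢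
  linear_combination -h

theorem stmt_7_general (d : ℕ) (t : ℝ) (ht : 0 < t) :
    f d (1 / t) = t ^ 2 * f d t := by
  cases d with
  | zero => simp [f, M]
  | succ n =>
    rw [one_div, f, f, discr_succ_inv n ht.ne', M_succ_inv n ht.ne',
      Real.sqrt_mul (by positivity), Real.sqrt_sq (by positivity)]
    field_simp

theorem stmt_7 (d : ℕ) (hd : 2 ≤ d) (t : ℝ) (ht : 0 < t) :
    f d (1 / t) = t ^ 2 * f d t :=
  stmt_7_general d t ht
end

section
/- For every integer n ≥ 2, π^{−n/2} · Γ(n/2) · ∫_{(0,∞)^{n−1}} (1 + Σ_{k=1}^{n−1} t_k²)^{−n/2} dt_1 ⋯ dt_{n−1} = 2^{1−n}. (This quantity is the expected number E(n,2) of internal equilibria of a two-player n-strategy random evolutionary game with independent standard Gaussian payoff differences.) -/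
open Finset MeasureTheory Real Set

/-!
For `t` in the positive orthant of `ℝ^m` and `s > m/2`, multiply by `Γ(s)` and write `Γ(s) (1 + |t|²)^(-s) = ∫₀^∞ x^(s-1) e^(-x) e^(-x|t|²) dx`.
After swapping the integrals (Tonelli), the orthant integral of `e^(-x|t|²)` factors into `m`
half-line Gaussian integrals `√(π/x)/2`, and what remains is `(√π/2)^m Γ(s - m/2)`.
For `m = n - 1`, `s = n/2` this is `(√π/2)^(n-1) Γ(1/2) = π^(n/2) / 2^(n-1)`.
-/

theorem lintegral_Ioi_rpow_mul_exp_neg_mul {a r : ℝ} (ha : 0 < a) (hr : 0 < r) :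
    ∫⁻ x in Ioi 0, ENNReal.ofReal (x ^ (a - 1) * exp (-(r * x))) =
      ENNReal.ofReal (r ^ (-a) * Gamma a) := by
  have hint : IntegrableOn (fun x : ℝ => x ^ (a - 1) * exp (-(r * x))) (Ioi 0) := by
    simpa using integrableOn_rpow_mul_exp_neg_mul_rpow (p := 1) (by linarith : -1 < a - 1)
      one_pos hr
  rw [← ofReal_integral_eq_lintegral_ofReal hint, integral_rpow_mul_exp_neg_mul_Ioi ha hr,
    one_div, inv_rpow hr.le, rpow_neg hr.le]
  exact (ae_restrict_iff' measurableSet_Ioi).2 <| ae_of_all _ fun x hx =>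
    mul_nonneg (rpow_nonneg (le_of_lt hx) _) (exp_pos _).le

section Orthant

variable {ι : Type*} [Fintype ι]

theorem lintegral_orthant_exp_neg_mul_sum_sq {x : ℝ} (hx : 0 < x) :
    ∫⁻ t : ι → ℝ in univ.pi fun _ => Ioi 0, ENNReal.ofReal (exp (-(x * ∑ i, t i ^ 2))) =
      ENNReal.ofReal ((√(π / x) / 2) ^ Fintype.card ι) := by
  have hprod (t : ι → ℝ) : exp (-(x * ∑ i, t i ^ 2)) = ∏ i, exp (-x * t i ^ 2) := by
    rw [← neg_mul, Finset.mul_sum, exp_sum]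
  simp_rw [hprod, volume_pi, Measure.restrict_pi_pi]
  rw [← ofReal_integral_eq_lintegral_ofReal,
    integral_fintype_prod_eq_pow (fun y => exp (-x * y ^ 2)), integral_gaussian_Ioi]
  · exact Integrable.fintype_prod fun _ => (integrable_exp_neg_mul_sq hx).integrableOn
  · exact ae_of_all _ fun t => prod_nonneg fun i _ => (exp_pos _).le

theorem rpow_sub_one_mul_sqrt_pi_div_pow {x : ℝ} (hx : 0 < x) (s : ℝ) (m : ℕ) :
    x ^ (s - 1) * (√(π / x) / 2) ^ m = (√π / 2) ^ m * x ^ (s - m / 2 - 1) := by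
  have hsqrt : √x ^ m = x ^ ((m : ℝ) / 2) := by
    rw [sqrt_eq_rpow, ← rpow_natCast, ← rpow_mul hx.le]
    ring_nf
  rw [sqrt_div' _ hx.le, div_div, div_pow, mul_pow, hsqrt, div_pow,
    show s - m / 2 - 1 = s - 1 - m / 2 by ring, rpow_sub hx (s - 1)]
  ring

theorem Gamma_mul_integral_orthant_one_add_sum_sq_rpow_neg {s : ℝ}
    (hs : (Fintype.card ι : ℝ) / 2 < s) :
    Gamma s * ∫ t : ι → ℝ in univ.pi fun _ => Ioi 0, (1 + ∑ i, t i ^ 2) ^ (-s) =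
      (√π / 2) ^ Fintype.card ι * Gamma (s - Fintype.card ι / 2) := by
  set m := Fintype.card ι
  have hs0 : 0 < s := lt_of_le_of_lt (by positivity) hs
  have hQ (t : ι → ℝ) : 0 < 1 + ∑ i, t i ^ 2 := by positivity
  have key : ∫⁻ t : ι → ℝ in univ.pi fun _ => Ioi 0,
      ENNReal.ofReal (Gamma s * (1 + ∑ i, t i ^ 2) ^ (-s)) =
      ENNReal.ofReal ((√π / 2) ^ m * Gamma (s - m / 2)) := calc
    _ = ∫⁻ t : ι → ℝ in univ.pi fun _ => Ioi 0, ∫⁻ x in Ioi 0,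
          ENNReal.ofReal (x ^ (s - 1) * exp (-x)) *
            ENNReal.ofReal (exp (-(x * ∑ i, t i ^ 2))) := by
      refine lintegral_congr fun t => ?_
      rw [mul_comm, ← lintegral_Ioi_rpow_mul_exp_neg_mul hs0 (hQ t)]
      refine lintegral_congr fun x => ?_
      rw [← ENNReal.ofReal_mul' (exp_pos _).le, mul_assoc, ← exp_add]
      ring_nf
    _ = ∫⁻ x in Ioi 0, ∫⁻ t : ι → ℝ in univ.pi fun _ => Ioi 0,
          ENNReal.ofReal (x ^ (s - 1) * exp (-x)) *
            ENNReal.ofReal (exp (-(x * ∑ i, t i ^ 2))) :=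
      lintegral_lintegral_swap (by fun_prop)
    _ = ∫⁻ x in Ioi 0, ENNReal.ofReal ((√π / 2) ^ m) *
          ENNReal.ofReal (x ^ (s - m / 2 - 1) * exp (-(1 * x))) := by
      refine setLIntegral_congr_fun measurableSet_Ioi fun x (hx : 0 < x) => ?_
      rw [lintegral_const_mul' _ _ ENNReal.ofReal_ne_top, lintegral_orthant_exp_neg_mul_sum_sq hx,
        ← ENNReal.ofReal_mul' (by positivity), ← ENNReal.ofReal_mul (by positivity), one_mul,
        ← mul_assoc, ← rpow_sub_one_mul_sqrt_pi_div_pow hx, mul_right_comm]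
    _ = _ := by
      rw [lintegral_const_mul' _ _ ENNReal.ofReal_ne_top,
        lintegral_Ioi_rpow_mul_exp_neg_mul (by linarith) one_pos, one_rpow, one_mul,
        ← ENNReal.ofReal_mul (by positivity)]
  rw [← integral_const_mul, integral_eq_lintegral_of_nonneg_ae, key,
    ENNReal.toReal_ofReal (mul_nonneg (by positivity) (Gamma_pos_of_pos (by linarith)).le)]
  · exact ae_of_all _ fun t => mul_nonneg (Gamma_pos_of_pos hs0).le (rpow_nonneg (hQ t).le _)
  · exact Measurable.aestronglyMeasurable (by fun_prop)

end Orthant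

theorem stmt_14 (n : ℕ) (hn : 2 ≤ n) :
    Real.pi ^ (-(n : ℝ) / 2) * Real.Gamma ((n : ℝ) / 2) *
      (∫ t : Fin (n - 1) → ℝ in Set.univ.pi (fun _ => Set.Ioi (0 : ℝ)),
        (1 + ∑ k, (t k) ^ 2) ^ (-(n : ℝ) / 2)) = (2 : ℝ) ^ (1 - (n : ℤ)) := by
  obtain ⟨m, rfl⟩ : ∃ m, n = m + 1 := ⟨n - 1, by omega⟩
  -- `Fin (m + 1 - 1)`, not `Fin m`: the goal's binder type cannot be rewritten.
  have h := Gamma_mul_integral_orthant_one_add_sum_sq_rpow_neg (ι := Fin (m + 1 - 1))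
    (s := ((m + 1 : ℕ) : ℝ) / 2) (by rw [Fintype.card_fin]; push_cast; linarith)
  simp only [Fintype.card_fin, Nat.add_sub_cancel] at h
  rw [neg_div, mul_assoc, h, show ((m + 1 : ℕ) : ℝ) / 2 - m / 2 = 1 / 2 by push_cast; ring,
    Gamma_one_half_eq]
  have hsqrt : √π ^ (m + 1) = π ^ (((m + 1 : ℕ) : ℝ) / 2) := by
    rw [sqrt_eq_rpow, ← rpow_natCast, ← rpow_mul pi_pos.le]
    ring_nf
  rw [show (√π / 2) ^ m * √π = √π ^ (m + 1) / 2 ^ m by rw [div_pow, pow_succ]; ring, hsqrt,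
    rpow_neg pi_pos.le, ← mul_div_assoc, inv_mul_cancel₀ (by positivity), one_div,
    Nat.cast_succ, show (1 : ℤ) - (m + 1) = -m by ring, zpow_neg, zpow_natCast]
end

section
/- Let d ≥ 2 be an integer and suppose r_1, …, r_{d−1} are positive real numbers such that M_d(t) = Π_{i=1}^{d−1} (t² + r_i) for all real t. Then Σ_{i=1}^{d−1} 2/(r_i + 1) = d − 1. -/
open Finset MeasureTheory

/-!
Compare logarithmic derivatives at `t = 1`. On the product side each factor `t² + rᵢ`
contributes `2 / (1 + rᵢ)`. On the other side `M_d'(1) = ∑ₖ 2k C(d-1,k)²`, and the symmetry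
`C(n,k) = C(n,n-k)` pairs `k` with `n - k`, so `M_d'(1) = (d - 1) M_d(1)`.
-/

theorem sum_choose_sq_mul_two_mul (n : ℕ) :
    ∑ k ∈ range (n + 1), (n.choose k : ℝ) ^ 2 * (2 * k) =
      n * ∑ k ∈ range (n + 1), (n.choose k : ℝ) ^ 2 := by
  have hreflect : ∑ k ∈ range (n + 1), (n.choose k : ℝ) ^ 2 * k =
      ∑ k ∈ range (n + 1), (n.choose k : ℝ) ^ 2 * (n - k) := by
    rw [← sum_range_reflect]
    refine sum_congr rfl fun k hk => ?_
    have hk : k ≤ n := Nat.lt_succ_iff.mp (mem_range.mp hk)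
    rw [add_tsub_cancel_right, Nat.choose_symm hk, Nat.cast_sub hk]
  calc ∑ k ∈ range (n + 1), (n.choose k : ℝ) ^ 2 * (2 * k)
      = ∑ k ∈ range (n + 1), (n.choose k : ℝ) ^ 2 * k +
          ∑ k ∈ range (n + 1), (n.choose k : ℝ) ^ 2 * (n - k) := by
        rw [← hreflect, ← sum_add_distrib]
        exact sum_congr rfl fun k _ => by ring
    _ = n * ∑ k ∈ range (n + 1), (n.choose k : ℝ) ^ 2 := by
        rw [← sum_add_distrib, mul_sum]
        exact sum_congr rfl fun k _ => by ring

theorem hasDerivAt_M_one (n : ℕ) :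
    HasDerivAt (M (n + 1)) (∑ k ∈ range (n + 1), (n.choose k : ℝ) ^ 2 * (2 * k)) 1 := by
  have h := HasDerivAt.fun_sum (u := range (n + 1)) fun k _ =>
    (hasDerivAt_pow (2 * k) (1 : ℝ)).const_mul ((n.choose k : ℝ) ^ 2)
  simp only [one_pow, mul_one, Nat.cast_mul, Nat.cast_ofNat] at h
  unfold M
  simpa only [add_tsub_cancel_right] using h

theorem M_succ_one (n : ℕ) : M (n + 1) 1 = ∑ k ∈ range (n + 1), (n.choose k : ℝ) ^ 2 := by
  simp only [M, add_tsub_cancel_right, one_pow, mul_one]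

theorem logDeriv_M_one (n : ℕ) : logDeriv (M (n + 1)) 1 = n := by
  have hpos : 0 < ∑ k ∈ range (n + 1), (n.choose k : ℝ) ^ 2 :=
    sum_pos (fun k hk => pow_pos (Nat.cast_pos.mpr
      (Nat.choose_pos (Nat.lt_succ_iff.mp (mem_range.mp hk)))) 2) nonempty_range_add_one
  rw [logDeriv_apply, (hasDerivAt_M_one n).deriv, sum_choose_sq_mul_two_mul, M_succ_one,
    mul_div_cancel_right₀ _ hpos.ne']

theorem logDeriv_sq_add_const (c x : ℝ) :
    logDeriv (fun t : ℝ => t ^ 2 + c) x = 2 * x / (x ^ 2 + c) := by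
  rw [logDeriv_apply, ((hasDerivAt_pow 2 x).add_const c).deriv]
  norm_num

theorem stmt_16 (d : ℕ) (hd : 2 ≤ d) (r : Fin (d - 1) → ℝ) (hr : ∀ i, 0 < r i)
    (hM : ∀ t : ℝ, M d t = ∏ i, (t ^ 2 + r i)) :
    ∑ i, 2 / (r i + 1) = (d : ℝ) - 1 := by
  obtain ⟨n, rfl⟩ : ∃ n, d = n + 1 := ⟨d - 1, by omega⟩
  have hprod : logDeriv (fun t : ℝ => ∏ i, (t ^ 2 + r i)) 1 = ∑ i, 2 / (r i + 1) := by
    rw [logDeriv_prod (fun i _ => by have := hr i; positivity) (fun i _ => by fun_prop)]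
    refine sum_congr rfl fun i _ => ?_
    rw [logDeriv_sq_add_const, one_pow, mul_one, add_comm]
  rw [← hprod, ← funext hM, logDeriv_M_one]
  push_cast
  ring
end

section
/- Let d ≥ 2 be an integer and let r_1, …, r_{d−1} be positive real numbers such that Π_{i=1}^{d−1} r_i = 1 and Σ_{i=1}^{d−1} Π_{j≠i} r_j = (d−1)². Then Σ_{i=1}^{d−1} arctan(1/√(r_i))/√(r_i) ≤ (π/2)·(d−1)^{3/2}. -/
open Finset

theorem stmt_18 (d : ℕ) (hd : 2 ≤ d) (r : Fin (d - 1) → ℝ) (hr : ∀ i, 0 < r i)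
    (h1 : (∏ i, r i) = 1)
    (h2 : ∑ i, ∏ j ∈ Finset.univ.erase i, r j = ((d : ℝ) - 1) ^ 2) :
    ∑ i, Real.arctan (1 / Real.sqrt (r i)) / Real.sqrt (r i) ≤
      Real.pi / 2 * ((d : ℝ) - 1) ^ ((3 : ℝ) / 2) := by
  set c : ℝ := (d : ℝ) - 1 with hc_def
  have hc1 : (1:ℝ) ≤ c := by
    have : (2:ℝ) ≤ (d:ℝ) := by exact_mod_cast hd
    simp only [hc_def]; linarith
  have hc0 : (0:ℝ) ≤ c := by linarith
  have hcard : ((Finset.univ : Finset (Fin (d-1))).card : ℝ) = c := by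
    simp only [Finset.card_univ, Fintype.card_fin, hc_def]
    rw [Nat.cast_sub (by omega : 1 ≤ d)]
    norm_num
  have hsum : ∑ i, 1 / r i = c ^ 2 := by
    rw [← h2]
    refine Finset.sum_congr rfl fun i _ => ?_
    rw [div_eq_iff (hr i).ne', Finset.prod_erase_mul _ _ (Finset.mem_univ i), h1]
  -- Cauchy-Schwarz step
  have hS0 : 0 ≤ ∑ i, 1 / Real.sqrt (r i) := by
    apply Finset.sum_nonneg
    intro i _
    positivity
  have hCS : (∑ i, 1 / Real.sqrt (r i)) ^ 2 ≤ c ^ 3 := by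
    have := sq_sum_le_card_mul_sum_sq (s := (Finset.univ : Finset (Fin (d-1))))
      (f := fun i => 1 / Real.sqrt (r i))
    have hsq : ∑ i, (1 / Real.sqrt (r i)) ^ 2 = c ^ 2 := by
      rw [← hsum]
      refine Finset.sum_congr rfl fun i _ => ?_
      rw [div_pow, one_pow, Real.sq_sqrt (hr i).le]
    calc (∑ i, 1 / Real.sqrt (r i)) ^ 2
        ≤ ((Finset.univ : Finset (Fin (d-1))).card : ℝ) * ∑ i, (1 / Real.sqrt (r i)) ^ 2 := this
      _ = c * c ^ 2 := by rw [hcard, hsq]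
      _ = c ^ 3 := by ring
  have hSle : ∑ i, 1 / Real.sqrt (r i) ≤ c ^ ((3:ℝ)/2) := by
    have h1' : ∑ i, 1 / Real.sqrt (r i) ≤ Real.sqrt (c ^ 3) := by
      rw [show (∑ i, 1 / Real.sqrt (r i)) = Real.sqrt ((∑ i, 1 / Real.sqrt (r i))^2) by
        rw [Real.sqrt_sq hS0]]
      exact Real.sqrt_le_sqrt hCS
    have h2' : Real.sqrt (c ^ 3) = c ^ ((3:ℝ)/2) := by
      rw [Real.sqrt_eq_rpow, ← Real.rpow_natCast c 3, ← Real.rpow_mul hc0]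
      norm_num
    rwa [h2'] at h1'
  have hterm : ∀ i, Real.arctan (1 / Real.sqrt (r i)) / Real.sqrt (r i)
      ≤ Real.pi / 2 * (1 / Real.sqrt (r i)) := by
    intro i
    have hs : 0 < Real.sqrt (r i) := Real.sqrt_pos.2 (hr i)
    rw [div_le_iff₀ hs]
    have := (Real.arctan_lt_pi_div_two (1 / Real.sqrt (r i))).le
    calc Real.arctan (1 / Real.sqrt (r i)) ≤ Real.pi / 2 := this
      _ = Real.pi / 2 * (1 / Real.sqrt (r i)) * Real.sqrt (r i) := by
        field_simp
  calc ∑ i, Real.arctan (1 / Real.sqrt (r i)) / Real.sqrt (r i)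
      ≤ ∑ i, Real.pi / 2 * (1 / Real.sqrt (r i)) :=
        Finset.sum_le_sum fun i _ => hterm i
    _ = Real.pi / 2 * ∑ i, 1 / Real.sqrt (r i) := by rw [Finset.mul_sum]
    _ ≤ Real.pi / 2 * c ^ ((3:ℝ)/2) := by
        apply mul_le_mul_of_nonneg_left hSle
        positivity
end
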